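/- Let G be a group, μ : G → ℝ a homogeneous quasi-morphism, and D > 0 a defect bound for μ. Define ν : G → ℝ by ν(1) = 0 and ν(g) = |μ(g)| + D for g ≠ 1. Then ν is a conjugation-invariant norm on G: (a) ν(g) ≥ 0 with ν(g) = 0 if and only if g = 1; (b) ν(gh) ≤ ν(g) + ν(h) for all g, h ∈ G; (c) ν(g⁻¹) = ν(g) for all g ∈ G; (d) ν(g h g⁻¹) = ν(h) for all g, h ∈ G. -/
import Mathlib


/-- If `μ` is a homogeneous quasi-morphism on a group `G` with defect bound `D > 0`,
then `ν` defined by `ν 1 = 0` and `ν g = |μ g| + D` for `g ≠ 1` is a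
conjugation-invariant norm on `G`. -/
theorem qm_gives_conjugation_invariant_norm {G : Type*} [Group G] (μ : G → ℝ) (D : ℝ)
    (hDpos : 0 < D)
    (hdefect : ∀ a b : G, |μ (a * b) - μ a - μ b| ≤ D)
    (hhom : ∀ (a : G) (k : ℤ), μ (a ^ k) = (k : ℝ) * μ a)
    (ν : G → ℝ) (hν1 : ν 1 = 0) (hν : ∀ g : G, g ≠ 1 → ν g = |μ g| + D) :
    (∀ g : G, 0 ≤ ν g ∧ (ν g = 0 ↔ g = 1)) ∧
    (∀ g h : G, ν (g * h) ≤ ν g + ν h) ∧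
    (∀ g : G, ν g⁻¹ = ν g) ∧
    (∀ g h : G, ν (g * h * g⁻¹) = ν h) := by
  have hμinv : ∀ g : G, μ g⁻¹ = -μ g := by
    intro g
    have := hhom g (-1)
    simpa using this
  have hconj : ∀ g h : G, μ (g * h * g⁻¹) = μ h := by
    intro g h
    by_contra hne
    have hc : μ (g * h * g⁻¹) - μ h ≠ 0 := sub_ne_zero.mpr hne
    have hcpos : 0 < |μ (g * h * g⁻¹) - μ h| := abs_pos.mpr hc
    obtain ⟨n, hn⟩ := exists_nat_gt (2 * D / |μ (g * h * g⁻¹) - μ h|)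
    have key : ∀ m : ℤ, |(m : ℝ) * (μ (g * h * g⁻¹) - μ h)| ≤ 2 * D := by
      intro m
      have e1 : (g * h * g⁻¹) ^ m = g * h ^ m * g⁻¹ := conj_zpow
      have eq1 : μ (g * h ^ m * g⁻¹) = (m : ℝ) * μ (g * h * g⁻¹) := by
        rw [← e1]; exact hhom _ m
      have eq2 : μ (h ^ m) = (m : ℝ) * μ h := hhom _ m
      have h1 := abs_le.mp (hdefect (g * h ^ m) g⁻¹)
      have h2 := abs_le.mp (hdefect g (h ^ m))
      have h3 := hμinv g
      rw [abs_le]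
      constructor <;> nlinarith [h1.1, h1.2, h2.1, h2.2]
    have := key n
    rw [div_lt_iff₀ hcpos] at hn
    have : |(n : ℝ)| * |μ (g * h * g⁻¹) - μ h| ≤ 2 * D := by
      rw [← abs_mul]; exact_mod_cast key n
    rw [abs_of_nonneg (by positivity : (0:ℝ) ≤ (n:ℝ))] at this
    linarith
  have hpos : ∀ g : G, 0 ≤ ν g ∧ (ν g = 0 ↔ g = 1) := by
    intro g
    by_cases hg : g = 1
    · subst hg; simp [hν1]
    · rw [hν g hg]
      have : 0 < |μ g| + D := by positivity
      constructor
      · linarith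
      · constructor
        · intro h; linarith
        · intro h; exact absurd h hg
  refine ⟨hpos, ?_, ?_, ?_⟩
  · intro g h
    by_cases hg : g = 1
    · subst hg; simp [hν1]
    by_cases hh : h = 1
    · subst hh; simp [hν1]
    by_cases hgh : g * h = 1
    · rw [hgh, hν1]
      have := (hpos g).1
      have := (hpos h).1
      linarith
    · rw [hν _ hgh, hν _ hg, hν _ hh]
      have h1 := abs_le.mp (hdefect g h)
      rcases abs_cases (μ (g * h)) with ⟨e, _⟩ | ⟨e, _⟩ <;>
        rcases abs_cases (μ g) with ⟨e2, _⟩ | ⟨e2, _⟩ <;>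
        rcases abs_cases (μ h) with ⟨e3, _⟩ | ⟨e3, _⟩ <;>
        rw [e, e2, e3] <;> linarith [h1.1, h1.2]
  · intro g
    by_cases hg : g = 1
    · subst hg; simp
    · have hgi : g⁻¹ ≠ 1 := by simpa using hg
      rw [hν _ hgi, hν _ hg, hμinv, abs_neg]
  · intro g h
    by_cases hh : h = 1
    · subst hh; simp
    · have hc : g * h * g⁻¹ ≠ 1 := by
        intro e
        apply hh
        have : h = g⁻¹ * 1 * g := by
          rw [← e]; group
        simpa using this
      rw [hν _ hc, hν _ hh, hconj]
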